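/- Consider the discrete-time linear system x⁺ = A x + B u + w with A ∈ ℝ^{n×n}, B ∈ ℝ^{n×m}, feedback gain K ∈ ℝ^{m×n}, A_K = A + BK, and disturbance zonotope W = ⟨c_ω, G_ω⟩ ⊂ ℝ^n with G_ω ∈ ℝ^{n×D_ω}. Let G ∈ ℝ^{n×D}, δ, δ⁺ ∈ ℝ^D with δ ≥ 0 and δ⁺ ≥ 0 componentwise, Δ = diag(δ), Δ⁺ = diag(δ⁺), centers c, c⁺ ∈ ℝ^n, nominal states x̄, x̄⁺ ∈ ℝ^n, nominal input ū ∈ ℝ^m; set D̄ = 1 + D + D_ω and V = [I_{D̄} −I_{D̄}]. If there exists Φ ∈ ℝ^{2D̄×D} with G Φᵀ Vᵀ = [ (−c⁺ − x̄⁺ + A x̄ + B ū + A_K c + c_ω) A_K G Δ G_ω ], Φ ≥ 0 entrywise, and Φᵀ 1_{2D̄} ≤ δ⁺ componentwise, then for every x ∈ {x̄} ⊕ ⟨c, GΔ⟩ and every w ∈ W, the successor state A x + B(ū + K(x − x̄)) + w belongs to {x̄⁺} ⊕ ⟨c⁺, G Δ⁺⟩. -/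

import Mathlib

open Matrix Pointwise BigOperators

/-- The zonotope `⟨c, G⟩ = {c + Gξ : ‖ξ‖_∞ ≤ 1}` (sup norm on the Pi type). -/
def zonotope {d D : Type*} [Fintype d] [Fintype D]
    (c : d → ℝ) (G : Matrix d D ℝ) : Set (d → ℝ) :=
  {x | ∃ ξ : D → ℝ, ‖ξ‖ ≤ 1 ∧ x = c + G.mulVec ξ}

/-
Homogenise: with `y = (1, ξ, η)` in the unit cube, the successor of `x̄ + c + GΔξ` under the
disturbance `c_ω + G_ω η` is `x̄⁺ + c⁺ + M y`, where `M = [d  A_K G Δ  G_ω]` is the right-hand side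
of the certificate identity. As `Vᵀ y = (y, -y)` lies in the unit cube too and `M = G Φᵀ Vᵀ`, the
successor is `x̄⁺ + c⁺ + G ζ` with `ζ = Φᵀ Vᵀ y`. Now `Φ ≥ 0` and `Φᵀ 1 ≤ δ⁺` give
`|ζ_j| ≤ δ⁺_j`, so `ζ = Δ⁺ ξ⁺` for some `ξ⁺` in the unit cube.
-/

theorem norm_le_one_iff_forall_abs_le_one {ι : Type*} [Fintype ι] {ξ : ι → ℝ} :
    ‖ξ‖ ≤ 1 ↔ ∀ j, |ξ j| ≤ 1 := by
  simp only [pi_norm_le_iff_of_nonneg zero_le_one, Real.norm_eq_abs]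

theorem add_mulVec_mem_zonotope_mul_diagonal {d ι : Type*} [Fintype d] [Fintype ι]
    [DecidableEq ι] {c : d → ℝ} {G : Matrix d ι ℝ} {δ ζ : ι → ℝ} (h : ∀ j, |ζ j| ≤ δ j) :
    c + G *ᵥ ζ ∈ zonotope c (G * diagonal δ) := by
  -- where `δ j = 0`, `h` forces `ζ j = 0`, matching the junk value `ζ j / 0 = 0`
  refine ⟨fun j => ζ j / δ j, norm_le_one_iff_forall_abs_le_one.2 fun j => ?_, ?_⟩
  · rw [abs_div, abs_of_nonneg ((abs_nonneg _).trans (h j))]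
    exact div_le_one_of_le₀ (h j) ((abs_nonneg _).trans (h j))
  · rw [← mulVec_mulVec]
    congr 2
    funext j
    rw [mulVec_diagonal]
    rcases eq_or_ne (δ j) 0 with hδ | hδ
    · have hζ : ζ j = 0 := abs_nonpos_iff.1 (hδ ▸ h j)
      simp [hζ]
    · exact (mul_div_cancel₀ _ hδ).symm

theorem abs_vecMul_le_sum_of_nonneg {κ ι : Type*} [Fintype κ] {Φ : Matrix κ ι ℝ}
    (hΦ : ∀ r j, 0 ≤ Φ r j) {z : κ → ℝ} (hz : ∀ r, |z r| ≤ 1) (j : ι) :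
    |(z ᵥ* Φ) j| ≤ ∑ r, Φ r j :=
  calc |(z ᵥ* Φ) j| = |∑ r, z r * Φ r j| := rfl
    _ ≤ ∑ r, |z r * Φ r j| := Finset.abs_sum_le_sum_abs _ _
    _ ≤ ∑ r, Φ r j := Finset.sum_le_sum fun r _ => by
        rw [abs_mul, abs_of_nonneg (hΦ r j)]
        exact mul_le_of_le_one_left (hΦ r j) (hz r)

theorem transpose_fromCols_one_neg_one_mulVec {ι : Type*} [Fintype ι] [DecidableEq ι]
    (y : ι → ℝ) : (fromCols (1 : Matrix ι ι ℝ) (-1))ᵀ *ᵥ y = Sum.elim y (-y) := by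
  rw [transpose_fromCols, transpose_one, transpose_neg, transpose_one, fromRows_mulVec,
    one_mulVec, neg_mulVec, one_mulVec]

theorem of_sumElim_mulVec_sumElim_one {d ι κ : Type*} [Fintype ι] [Fintype κ] (v : d → ℝ)
    (M : Matrix d ι ℝ) (N : Matrix d κ ℝ) (ξ : ι → ℝ) (η : κ → ℝ) :
    (of fun r j => Sum.elim (fun _ : Unit => v r) (Sum.elim (fun k => M r k) (fun k => N r k)) j)
        *ᵥ Sum.elim (fun _ => 1) (Sum.elim ξ η) = v + M *ᵥ ξ + N *ᵥ η := by
  funext r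
  simp [mulVec, dotProduct, Fintype.sum_sum_type, add_assoc]

theorem one_step_reachability_Phi_general
    {n m D Dω : ℕ}
    (A : Matrix (Fin n) (Fin n) ℝ) (B : Matrix (Fin n) (Fin m) ℝ)
    (K : Matrix (Fin m) (Fin n) ℝ)
    (cω : Fin n → ℝ) (Gω : Matrix (Fin n) (Fin Dω) ℝ)
    (G : Matrix (Fin n) (Fin D) ℝ)
    (δ δp : Fin D → ℝ)
    (c cp xbar xbarp : Fin n → ℝ) (ubar : Fin m → ℝ)
    (Φ : Matrix ((Unit ⊕ Fin D ⊕ Fin Dω) ⊕ (Unit ⊕ Fin D ⊕ Fin Dω)) (Fin D) ℝ)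
    (hΦeq : G * ((Φᵀ * (Matrix.fromCols
        (1 : Matrix (Unit ⊕ Fin D ⊕ Fin Dω) (Unit ⊕ Fin D ⊕ Fin Dω) ℝ) (-1))ᵀ : Matrix (Fin D) (Unit ⊕ Fin D ⊕ Fin Dω) ℝ))
      = Matrix.of fun r j =>
          Sum.elim (fun _ : Unit =>
              -cp r - xbarp r + A.mulVec xbar r + B.mulVec ubar r
                + (A + B * K).mulVec c r + cω r)
            (Sum.elim (fun k => ((A + B * K) * G * Matrix.diagonal δ) r k)
                      (fun k => Gω r k)) j)
    (hΦpos : ∀ r j, 0 ≤ Φ r j)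
    (hΦsum : ∀ j, ∑ r, Φ r j ≤ δp j) :
    ∀ x ∈ ({xbar} : Set (Fin n → ℝ)) + zonotope c (G * Matrix.diagonal δ),
    ∀ w ∈ zonotope cω Gω,
      A.mulVec x + B.mulVec (ubar + K.mulVec (x - xbar)) + w
        ∈ ({xbarp} : Set (Fin n → ℝ)) + zonotope cp (G * Matrix.diagonal δp) := by
  rintro _ ⟨x₀, hx₀, _, ⟨ξ, hξ, rfl⟩, rfl⟩ _ ⟨η, hη, rfl⟩
  subst x₀
  set y : Unit ⊕ Fin D ⊕ Fin Dω → ℝ := Sum.elim (fun _ => 1) (Sum.elim ξ η)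
  have hy : ∀ r, |y r| ≤ 1 := by
    rintro (_ | r | r)
    · simp [y]
    · exact norm_le_one_iff_forall_abs_le_one.1 hξ r
    · exact norm_le_one_iff_forall_abs_le_one.1 hη r
  have hz : ∀ r, |Sum.elim y (-y) r| ≤ 1 := by
    rintro (r | r) <;> simp [hy r]
  have hζ : ∀ j, |(Φᵀ *ᵥ Sum.elim y (-y)) j| ≤ δp j := fun j => by
    rw [mulVec_transpose]
    exact (abs_vecMul_le_sum_of_nonneg hΦpos hz j).trans (hΦsum j)
  have hGζ : G *ᵥ (Φᵀ *ᵥ Sum.elim y (-y)) =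
      (-cp - xbarp + A *ᵥ xbar + B *ᵥ ubar + (A + B * K) *ᵥ c + cω)
        + ((A + B * K) * G * diagonal δ) *ᵥ ξ + Gω *ᵥ η := by
    rw [← transpose_fromCols_one_neg_one_mulVec, mulVec_mulVec, mulVec_mulVec, Matrix.mul_assoc]
    exact (congrArg (· *ᵥ y) hΦeq).trans (of_sumElim_mulVec_sumElim_one _ _ _ ξ η)
  refine ⟨xbarp, rfl, cp + G *ᵥ (Φᵀ *ᵥ Sum.elim y (-y)),
    add_mulVec_mem_zonotope_mul_diagonal hζ, ?_⟩
  rw [hGζ, add_sub_cancel_left]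
  simp only [mulVec_add, add_mulVec, ← mulVec_mulVec]
  abel

/-- The `Φ`-certificate version of the one-step reachability condition: if
`G Φᵀ Vᵀ = [ (−c⁺ − x̄⁺ + A x̄ + B ū + A_K c + c_ω)  A_K G Δ  G_ω ]`, `Φ ≥ 0`,
`Φᵀ 1 ≤ δ⁺` (block columns indexed by `Unit ⊕ Fin D ⊕ Fin Dω`, `D̄ = 1 + D + Dω`),
then for every `x ∈ {x̄} ⊕ ⟨c, GΔ⟩` and `w ∈ W`, the successor
`A x + B(ū + K(x − x̄)) + w` lies in `{x̄⁺} ⊕ ⟨c⁺, GΔ⁺⟩`. -/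
theorem one_step_reachability_Phi
    {n m D Dω : ℕ}
    (A : Matrix (Fin n) (Fin n) ℝ) (B : Matrix (Fin n) (Fin m) ℝ)
    (K : Matrix (Fin m) (Fin n) ℝ)
    (cω : Fin n → ℝ) (Gω : Matrix (Fin n) (Fin Dω) ℝ)
    (G : Matrix (Fin n) (Fin D) ℝ)
    (δ δp : Fin D → ℝ) (hδ : ∀ j, 0 ≤ δ j) (hδp : ∀ j, 0 ≤ δp j)
    (c cp xbar xbarp : Fin n → ℝ) (ubar : Fin m → ℝ)
    (Φ : Matrix ((Unit ⊕ Fin D ⊕ Fin Dω) ⊕ (Unit ⊕ Fin D ⊕ Fin Dω)) (Fin D) ℝ)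
    (hΦeq : G * ((Φᵀ * (Matrix.fromCols
        (1 : Matrix (Unit ⊕ Fin D ⊕ Fin Dω) (Unit ⊕ Fin D ⊕ Fin Dω) ℝ) (-1))ᵀ : Matrix (Fin D) (Unit ⊕ Fin D ⊕ Fin Dω) ℝ))
      = Matrix.of fun r j =>
          Sum.elim (fun _ : Unit =>
              -cp r - xbarp r + A.mulVec xbar r + B.mulVec ubar r
                + (A + B * K).mulVec c r + cω r)
            (Sum.elim (fun k => ((A + B * K) * G * Matrix.diagonal δ) r k)
                      (fun k => Gω r k)) j)
    (hΦpos : ∀ r j, 0 ≤ Φ r j)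
    (hΦsum : ∀ j, ∑ r, Φ r j ≤ δp j) :
    ∀ x ∈ ({xbar} : Set (Fin n → ℝ)) + zonotope c (G * Matrix.diagonal δ),
    ∀ w ∈ zonotope cω Gω,
      A.mulVec x + B.mulVec (ubar + K.mulVec (x - xbar)) + w
        ∈ ({xbarp} : Set (Fin n → ℝ)) + zonotope cp (G * Matrix.diagonal δp) :=
  one_step_reachability_Phi_general A B K cω Gω G δ δp c cp xbar xbarp ubar Φ hΦeq hΦpos hΦsum
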